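/- For every limit periodic function f : ℝ → ℂ there exists a sequence (f_n)_{n≥1} of functions ℝ → ℂ such that f_n is 2πn-periodic for each n, and (f_n) converges pointwise to f along the divisibility net: for every x ∈ ℝ and every ε > 0 there is a positive integer N such that |f(x) − f_n(x)| < ε whenever N ∣ n. -/

import Mathlib

open Complex Real Filter MeasureTheory

noncomputable section

/-- The profinite completion of `ℤ`: the inverse limit of the groups `ZMod n`
over the divisibility order. -/
def Zhat : Type :=
  {a : (n : ℕ+) → ZMod n //
    ∀ (n k : ℕ+), ZMod.castHom
        (show ((n : ℕ+) : ℕ) ∣ ((n * k : ℕ+) : ℕ) by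
          rw [PNat.mul_coe]; exact dvd_mul_right _ _)
        (ZMod n) (a (n * k)) = a n}

instance (n : ℕ) : TopologicalSpace (ZMod n) := ⊥

instance : TopologicalSpace Zhat := by unfold Zhat; infer_instance

instance : MeasurableSpace Zhat := borel _

instance : Zero Zhat := ⟨⟨fun _ => 0, fun _ _ => map_zero _⟩⟩

instance : Add Zhat :=
  ⟨fun a b => ⟨fun n => a.1 n + b.1 n, fun n k => by rw [map_add, a.2 n k, b.2 n k]⟩⟩

/-- The canonical inclusion `ℤ → ẑ`. -/
def iotaZ (k : ℤ) : Zhat := ⟨fun n => (k : ZMod n), fun n m => by rw [map_intCast]⟩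

/-- Multiplication by a natural number on `ẑ`. -/
def nsmulZ (c : ℕ) (a : Zhat) : Zhat :=
  ⟨fun n => (c : ZMod n) * a.1 n, fun n k => by rw [map_mul, map_natCast, a.2 n k]⟩

lemma exp_real_mul_I_norm (θ : ℝ) : ‖Complex.exp ((θ : ℂ) * Complex.I)‖ = 1 := by
  first
  | exact Complex.norm_exp_ofReal_mul_I θ
  | simp [Complex.norm_exp]

lemma exp_div_pow (θ : ℝ) (n k : ℕ+) :
    Complex.exp (((θ / (((n * k : ℕ+) : ℕ)) : ℝ) : ℂ) * Complex.I) ^ ((k : ℕ+) : ℕ)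
      = Complex.exp (((θ / ((n : ℕ+) : ℕ) : ℝ) : ℂ) * Complex.I) := by
  rw [← Complex.exp_nat_mul]
  congr 1
  have hn : (((n : ℕ+) : ℕ) : ℂ) ≠ 0 := by exact_mod_cast n.ne_zero
  have hk : (((k : ℕ+) : ℕ) : ℂ) ≠ 0 := by exact_mod_cast k.ne_zero
  rw [PNat.mul_coe]
  push_cast
  field_simp

lemma exp_div_powC (w : ℂ) (n k : ℕ+) :
    Complex.exp (w / (((n * k : ℕ+) : ℕ) : ℂ)) ^ ((k : ℕ+) : ℕ)
      = Complex.exp (w / (((n : ℕ+) : ℕ) : ℂ)) := by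
  rw [← Complex.exp_nat_mul]
  congr 1
  have hn : (((n : ℕ+) : ℕ) : ℂ) ≠ 0 := by exact_mod_cast n.ne_zero
  have hk : (((k : ℕ+) : ℕ) : ℂ) ≠ 0 := by exact_mod_cast k.ne_zero
  rw [PNat.mul_coe]
  push_cast
  field_simp

lemma exp_natCast_congr (n : ℕ+) (A B : ℕ)
    (h : (A : ZMod ((n : ℕ+) : ℕ)) = (B : ZMod ((n : ℕ+) : ℕ))) :
    Complex.exp (((2 * π * A / ((n : ℕ+) : ℕ) : ℝ) : ℂ) * Complex.I)
      = Complex.exp (((2 * π * B / ((n : ℕ+) : ℕ) : ℝ) : ℂ) * Complex.I) := by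
  rw [ZMod.natCast_eq_natCast_iff] at h
  obtain ⟨j, hj⟩ := Nat.modEq_iff_dvd.mp h
  have hn : ((((n : ℕ+) : ℕ) : ℝ)) ≠ 0 := by exact_mod_cast n.ne_zero
  have hB : (B : ℝ) = (A : ℝ) + (((n : ℕ+) : ℕ) : ℝ) * (j : ℝ) := by
    have : (B : ℤ) = (A : ℤ) + (((n : ℕ+) : ℕ) : ℤ) * j := by linarith [hj]
    exact_mod_cast congrArg (fun t : ℤ => (t : ℝ)) this
  have key : ((2 * π * B / ((n : ℕ+) : ℕ) : ℝ) : ℂ) * Complex.I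
      = ((2 * π * A / ((n : ℕ+) : ℕ) : ℝ) : ℂ) * Complex.I + (j : ℂ) * (2 * (π : ℂ) * Complex.I) := by
    have hnC : ((((n : ℕ+) : ℕ) : ℂ)) ≠ 0 := by exact_mod_cast n.ne_zero
    push_cast [hB]
    field_simp
  rw [key, Complex.exp_add, Complex.exp_int_mul_two_pi_mul_I, mul_one]

/-- The component at level `n` of the canonical map `ẑ → S¹_ℚ`,
`l ↦ e^{2πil/n}`. -/
def phiComp (a : Zhat) (n : ℕ+) : ℂ :=
  Complex.exp (((2 * π * ((a.1 n).val : ℕ) / ((n : ℕ+) : ℕ) : ℝ) : ℂ) * Complex.I)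

lemma phiComp_pow (a : Zhat) (n k : ℕ+) : phiComp a (n * k) ^ ((k : ℕ+) : ℕ) = phiComp a n := by
  unfold phiComp
  rw [exp_div_pow]
  haveI : NeZero (((n * k : ℕ+) : ℕ)) := ⟨(n * k).ne_zero⟩
  haveI : NeZero (((n : ℕ+) : ℕ)) := ⟨n.ne_zero⟩
  apply exp_natCast_congr
  have h := a.2 n k
  rw [ZMod.castHom_apply] at h
  rw [ZMod.natCast_val, ZMod.natCast_val, ZMod.cast_id, h]

/-- The adelic solenoid `S¹_ℚ`: the inverse limit of the circles
`S¹ = {z ∈ ℂ : ‖z‖ = 1}` under the covering maps `z ↦ z^{m/n}` for `n ∣ m`. -/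
def SolQ : Type :=
  {z : ℕ+ → ℂ // (∀ n, ‖z n‖ = 1) ∧ ∀ (n k : ℕ+), z (n * k) ^ ((k : ℕ+) : ℕ) = z n}

instance : TopologicalSpace SolQ := by unfold SolQ; infer_instance
instance : MeasurableSpace SolQ := borel _

instance : Mul SolQ :=
  ⟨fun x y => ⟨fun n => x.1 n * y.1 n,
    ⟨fun n => by rw [norm_mul, x.2.1 n, y.2.1 n, one_mul],
     fun n k => by rw [mul_pow, x.2.2 n k, y.2.2 n k]⟩⟩⟩

instance : One SolQ := ⟨⟨fun _ => 1, ⟨fun _ => norm_one, fun _ _ => one_pow _⟩⟩⟩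

/-- The canonical homomorphism `φ : ẑ → S¹_ℚ`, induced componentwise by
`l ↦ e^{2πil/n}`. -/
def phiS (a : Zhat) : SolQ :=
  ⟨fun n => phiComp a n, ⟨fun n => exp_real_mul_I_norm _, phiComp_pow a⟩⟩

/-- The baseleaf `ν : ℝ → S¹_ℚ`, `ν(t) = (e^{it/n})ₙ`. -/
def nuS (t : ℝ) : SolQ :=
  ⟨fun n => Complex.exp (((t / ((n : ℕ+) : ℕ) : ℝ) : ℂ) * Complex.I),
   ⟨fun n => exp_real_mul_I_norm _, fun n k => exp_div_pow t n k⟩⟩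

/-- `exp : ẑ × ℝ → S¹_ℚ`, `exp(a, θ) = φ(a)·ν(θ)`. -/
def expS (p : Zhat × ℝ) : SolQ := phiS p.1 * nuS p.2

/-- The algebraic solenoid `ℂ*_ℚ`: the inverse limit of copies of `ℂ* = ℂ \ {0}`
under the covering maps `z ↦ z^{m/n}` for `n ∣ m`. -/
def CSolQ : Type :=
  {z : ℕ+ → ℂ // (∀ n, z n ≠ 0) ∧ ∀ (n k : ℕ+), z (n * k) ^ ((k : ℕ+) : ℕ) = z n}

instance : TopologicalSpace CSolQ := by unfold CSolQ; infer_instance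
instance : MeasurableSpace CSolQ := borel _

instance : Mul CSolQ :=
  ⟨fun x y => ⟨fun n => x.1 n * y.1 n,
    ⟨fun n => mul_ne_zero (x.2.1 n) (y.2.1 n),
     fun n k => by rw [mul_pow, x.2.2 n k, y.2.2 n k]⟩⟩⟩

instance : One CSolQ := ⟨⟨fun _ => 1, ⟨fun _ => one_ne_zero, fun _ _ => one_pow _⟩⟩⟩

/-- The canonical homomorphism `φ : ẑ → ℂ*_ℚ`. -/
def phiC (a : Zhat) : CSolQ :=
  ⟨fun n => phiComp a n, ⟨fun n => Complex.exp_ne_zero _, phiComp_pow a⟩⟩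

/-- The baseleaf `ν : ℂ → ℂ*_ℚ`, `ν(z) = (e^{iz/n})ₙ`. -/
def nuC (z : ℂ) : CSolQ :=
  ⟨fun n => Complex.exp (Complex.I * z / (((n : ℕ+) : ℕ) : ℂ)),
   ⟨fun n => Complex.exp_ne_zero _, fun n k => exp_div_powC (Complex.I * z) n k⟩⟩

/-- `exp : ẑ × ℂ → ℂ*_ℚ`, `exp(a, z) = φ(a)·ν(z)`. -/
def expC (a : Zhat) (z : ℂ) : CSolQ := phiC a * nuC z

/-- The `n`-th power map on the Riemann sphere `Ĉ = ℂ ∪ {∞}`, with `∞ ↦ ∞`. -/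
def spherePow (k : ℕ) (x : OnePoint ℂ) : OnePoint ℂ :=
  Option.map (fun z : ℂ => z ^ k) x

/-- The adelic Riemann sphere `Ĉ_ℚ`: the inverse limit of Riemann spheres under
the branched covering maps `z ↦ z^{m/n}` for `n ∣ m`. -/
def SphereQ : Type :=
  {z : ℕ+ → OnePoint ℂ // ∀ (n k : ℕ+), spherePow ((k : ℕ+) : ℕ) (z (n * k)) = z n}

instance : TopologicalSpace SphereQ := by unfold SphereQ; infer_instance

/-- The leaf maps `exp(a, ·) : ℂ → ℂ*_ℚ ⊂ Ĉ_ℚ` of the adelic Riemann sphere. -/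
def expSph (a : Zhat) (z : ℂ) : SphereQ :=
  ⟨fun n => OnePoint.some (phiComp a n * Complex.exp (Complex.I * z / (((n : ℕ+) : ℕ) : ℂ))),
   fun n k => by
     show OnePoint.some ((phiComp a (n * k) * _) ^ ((k : ℕ+) : ℕ)) = _
     rw [mul_pow, phiComp_pow, exp_div_powC]⟩

/-- The renormalization operator `I_n` on functions on `ℂ*_ℚ`:
the average of `μ` over the fiber `π_n⁻¹(π_n(x))`, namely
`I_n(μ)(x) = ∫_{ẑ} μ(φ(n·a)·x) dη(a)`. -/
def Iren (η : Measure Zhat) (n : ℕ+) (f : CSolQ → ℂ) (x : CSolQ) : ℂ :=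
  ∫ a : Zhat, f (phiC (nsmulZ ((n : ℕ+) : ℕ) a) * x) ∂η

/-- The renormalization operator `I_n` on functions on `S¹_ℚ`. -/
def IrenS (η : Measure Zhat) (n : ℕ+) (f : SolQ → ℂ) (x : SolQ) : ℂ :=
  ∫ a : Zhat, f (phiS (nsmulZ ((n : ℕ+) : ℕ) a) * x) ∂η

/-- The character `χ_q = (π_n)^m : S¹_ℚ → S¹` associated to a rational `q = m/n`. -/
def chiQ (q : ℚ) (x : SolQ) : ℂ := (x.1 ⟨q.den, q.den_pos⟩) ^ q.num

/-- A function `f : ℝ → ℂ` is limit periodic if for every `ε > 0` there is a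
positive integer `N` such that `|f(x + 2πn) − f(x)| < ε` for all `x ∈ ℝ` and
all integers `n ∈ Nℤ`. -/
def LimitPeriodic (f : ℝ → ℂ) : Prop :=
  ∀ ε : ℝ, 0 < ε → ∃ N : ℕ+, ∀ x : ℝ, ∀ n : ℤ, ((N : ℕ+) : ℤ) ∣ n →
    ‖f (x + 2 * π * n) - f x‖ < ε

/-- A function `f : ℂ → ℂ` is limit periodic with respect to `x` if for every
`ε > 0` and compact `K ⊆ ℝ` there is a positive integer `N` with
`|f(z + 2πn) − f(z)| < ε` for all `z` with `Im z ∈ K` and all `n ∈ Nℤ`. -/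
def LimitPeriodicX (f : ℂ → ℂ) : Prop :=
  ∀ ε : ℝ, 0 < ε → ∀ K : Set ℝ, IsCompact K → ∃ N : ℕ+,
    ∀ z : ℂ, z.im ∈ K → ∀ n : ℤ, ((N : ℕ+) : ℤ) ∣ n →
      ‖f (z + 2 * π * n) - f z‖ < ε

/-! Take `f_n` to be the restriction of `f` to `[0, 2πn)`, extended `2πn`-periodically. A point
and its reduction modulo `2πn` differ by an integer multiple of `2πn`, hence of `2πN` whenever
`N ∣ n`, so limit periodicity makes `f_n → f` even uniformly along the divisibility net. -/

lemma two_pi_mul_natCast_pos (n : ℕ+) : 0 < 2 * π * ((n : ℕ) : ℝ) := by positivity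

def periodization (f : ℝ → ℂ) (n : ℕ+) : ℝ → ℂ :=
  f ∘ toIcoMod (two_pi_mul_natCast_pos n) 0

lemma periodization_periodic (f : ℝ → ℂ) (n : ℕ+) :
    Function.Periodic (periodization f n) (2 * π * ((n : ℕ) : ℝ)) :=
  (toIcoMod_periodic _ 0).comp f

lemma LimitPeriodic.norm_sub_periodization_lt {f : ℝ → ℂ} (hf : LimitPeriodic f) {ε : ℝ}
    (hε : 0 < ε) :
    ∃ N : ℕ+, ∀ n : ℕ+, (N : ℕ) ∣ n → ∀ x, ‖f x - periodization f n x‖ < ε := by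
  obtain ⟨N, hN⟩ := hf ε hε
  refine ⟨N, fun n hn x => ?_⟩
  set y := toIcoMod (two_pi_mul_natCast_pos n) 0 x
  set k := toIcoDiv (two_pi_mul_natCast_pos n) 0 x
  have hx : y + 2 * π * ((n * k : ℤ) : ℝ) = x := by
    rw [← toIcoMod_add_toIcoDiv_zsmul (two_pi_mul_natCast_pos n) 0 x, zsmul_eq_mul]
    push_cast
    ring
  have hNm : ((N : ℕ) : ℤ) ∣ n * k := dvd_mul_of_dvd_left (Int.natCast_dvd_natCast.mpr hn) k
  have h := hN y _ hNm
  rwa [hx] at h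

/-- For every limit periodic `f : ℝ → ℂ` there is a sequence
`(f_n)` with `f_n` being `2πn`-periodic, converging pointwise to `f` along the
divisibility net. -/
theorem statement5 (f : ℝ → ℂ) (hf : LimitPeriodic f) :
    ∃ F : ℕ+ → ℝ → ℂ,
      (∀ n : ℕ+, ∀ x : ℝ, F n (x + 2 * π * ((n : ℕ+) : ℕ)) = F n x) ∧
      (∀ x : ℝ, ∀ ε : ℝ, 0 < ε → ∃ N : ℕ+, ∀ n : ℕ+, ((N : ℕ+) : ℕ) ∣ ((n : ℕ+) : ℕ) →
        ‖f x - F n x‖ < ε) :=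
  ⟨periodization f, periodization_periodic f, fun x _ hε =>
    (hf.norm_sub_periodization_lt hε).imp fun _ hN n hn => hN n hn x⟩

end
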